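/- Let X, Y ⊆ ℕ^d. If there exists k ≥ 1 such that no x ∈ X and y ∈ Y satisfy x ∼_k y, then X and Y are separable by a recognizable subset of ℕ^d. -/
import Mathlib


def simk (d k : ℕ) (u v : Fin d → ℕ) : Prop :=
  ∀ i : Fin d, (u i = v i ∧ u i ≤ k) ∨ (u i > k ∧ v i > k ∧ u i % k = v i % k)

/-- `U ⊆ ℕ` is ultimately periodic. -/
def UltPeriodic (U : Set ℕ) : Prop :=
  ∃ n0 p : ℕ, 1 ≤ p ∧ ∀ n ≥ n0, (n ∈ U ↔ n + p ∈ U)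

/-- A subset of `ℕ^d` is recognizable if it is a finite union of products
of ultimately periodic subsets of `ℕ`. -/
def Recognizable {d : ℕ} (S : Set (Fin d → ℕ)) : Prop :=
  ∃ (n : ℕ) (U : Fin n → Fin d → Set ℕ),
    (∀ j i, UltPeriodic (U j i)) ∧ S = ⋃ j, {v | ∀ i, v i ∈ U j i}

def cls (k n : ℕ) : ℕ := if n ≤ k then n else k + 1 + n % k

lemma cls_lt (k n : ℕ) (hk : 1 ≤ k) : cls k n < 2 * k + 1 := by
  unfold cls
  split
  · omega
  · have := Nat.mod_lt n (show 0 < k by omega)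
    omega

lemma ultPeriodic_cls (k m : ℕ) (hk : 1 ≤ k) : UltPeriodic {n | cls k n = m} := by
  refine ⟨k + 1, k, hk, fun n hn => ?_⟩
  have h1 : ¬ n ≤ k := by omega
  have h2 : ¬ n + k ≤ k := by omega
  simp only [Set.mem_setOf_eq, cls, if_neg h1, if_neg h2, Nat.add_mod_right]

lemma cls_eq_iff (k a b : ℕ) (hk : 1 ≤ k) :
    cls k a = cls k b ↔ ((a = b ∧ a ≤ k) ∨ (a > k ∧ b > k ∧ a % k = b % k)) := by
  have ha := Nat.mod_lt a (show 0 < k by omega)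
  have hb := Nat.mod_lt b (show 0 < k by omega)
  unfold cls
  rcases le_or_gt a k with h1 | h1 <;> rcases le_or_gt b k with h2 | h2
  · rw [if_pos h1, if_pos h2]; omega
  · rw [if_pos h1, if_neg (by omega)]; omega
  · rw [if_neg (by omega), if_pos h2]; omega
  · rw [if_neg (by omega), if_neg (by omega)]; omega

theorem separable_of_no_simk (d : ℕ) (X Y : Set (Fin d → ℕ))
    (h : ∃ k : ℕ, 1 ≤ k ∧ ∀ x ∈ X, ∀ y ∈ Y, ¬ simk d k x y) :
    ∃ S : Set (Fin d → ℕ), Recognizable S ∧ X ⊆ S ∧ S ∩ Y = ∅ := by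
  classical
  obtain ⟨k, hk, hXY⟩ := h
  rcases Set.eq_empty_or_nonempty X with hXe | ⟨x0, hx0⟩
  · refine ⟨∅, ⟨0, Fin.elim0, fun j => j.elim0, by simp⟩, by simp [hXe], by simp⟩
  set V : (Fin d → Fin (2 * k + 1)) → Fin d → Set ℕ := fun f i =>
    if ∃ x ∈ X, ∀ i', cls k (x i') = f i' then {n | cls k n = (f i : ℕ)} else ∅
    with hV
  set e := Fintype.equivFin (Fin d → Fin (2 * k + 1)) with he
  refine ⟨⋃ j : Fin (Fintype.card (Fin d → Fin (2 * k + 1))),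
    {v | ∀ i, v i ∈ V (e.symm j) i}, ⟨_, fun j => V (e.symm j), ?_, rfl⟩, ?_, ?_⟩
  · intro j i
    by_cases hc : ∃ x ∈ X, ∀ i', cls k (x i') = (e.symm j) i'
    · simpa [hV, if_pos hc] using ultPeriodic_cls k (e.symm j i) hk
    · refine ⟨0, 1, le_refl 1, fun n _ => ?_⟩
      simp [hV, if_neg hc]
  · intro x hx
    set f : Fin d → Fin (2 * k + 1) := fun i => ⟨cls k (x i), cls_lt k (x i) hk⟩ with hf
    have hc : ∃ x' ∈ X, ∀ i', cls k (x' i') = f i' := ⟨x, hx, fun i' => rfl⟩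
    refine Set.mem_iUnion.mpr ⟨e f, fun i => ?_⟩
    rw [Equiv.symm_apply_apply]
    simp only [hV, if_pos hc]
    rfl
  · by_contra hne
    obtain ⟨y, hyS, hyY⟩ := Set.not_disjoint_iff.mp
      (fun hd => hne (Set.disjoint_iff_inter_eq_empty.mp hd))
    obtain ⟨j, hj⟩ := Set.mem_iUnion.mp hyS
    set f := e.symm j with hfj
    by_cases hc : ∃ x ∈ X, ∀ i', cls k (x i') = f i'
    · obtain ⟨x, hx, hxf⟩ := hc
      have hy : ∀ i, cls k (y i) = (f i : ℕ) := by
        intro i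
        have := hj i
        simp only [hV] at this
        rwa [if_pos (show ∃ x ∈ X, ∀ i', cls k (x i') = (f i' : ℕ) from ⟨x, hx, hxf⟩)] at this
      refine hXY x hx y hyY (fun i => ?_)
      have : cls k (x i) = cls k (y i) := by rw [hxf i, hy i]
      exact (cls_eq_iff k (x i) (y i) hk).mp this
    · have : ¬ ∀ i', cls k (x0 i') = f i' := fun hall => hc ⟨x0, hx0, hall⟩
      obtain ⟨i, -⟩ := not_forall.mp this
      have := hj i
      simp only [hV] at this
      rw [if_neg hc] at this
      exact this
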